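/- Let α, N, k be natural numbers, let 𝔄 = (g_1,…,g_k) be a multiple colligation of size (α,N,k), and let λ_1,…,λ_k be nonzero complex numbers. Let λ denote the diagonal k×k matrix with entries λ_j, let S be a k×k matrix such that S̃ − d̃ is invertible, and let S' = λ·S·λ⁻¹. Then S̃' − d̃ is invertible and χ(𝔄; λ·S·λ⁻¹) = Λ · χ(𝔄; S) · Λ⁻¹, where Λ is the (kα)×(kα) block-diagonal matrix whose j-th diagonal block is λ_j·1_α. -/

import Mathlib

/-!
Conjugating `S` by `λ` conjugates `S̃ = 1 ⊗ S` by the diagonal matrix `D = 1 ⊗ λ`, which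
commutes with the block-diagonal `d̃`; hence `S̃' − d̃ = D (S̃ − d̃) D⁻¹`. Since `Λ b̃ = b̃ D` and
`D c̃ = c̃ Λ` (all of them act blockwise by the scalar `λ_j`), the resolvent term, and with it
`χ`, is conjugated by `Λ`.
-/

open Matrix

/-- Block-diagonal matrix `ã` of the `a`-blocks of a multiple colligation. -/
noncomputable def aT {k : ℕ} {A I : Type*} [DecidableEq (Fin k)]
    (g : Fin k → Matrix (A ⊕ I) (A ⊕ I) ℂ) : Matrix (A × Fin k) (A × Fin k) ℂ :=
  blockDiagonal fun j => (g j).toBlocks₁₁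

/-- Block-diagonal matrix `b̃` of the `b`-blocks of a multiple colligation. -/
noncomputable def bT {k : ℕ} {A I : Type*}
    (g : Fin k → Matrix (A ⊕ I) (A ⊕ I) ℂ) : Matrix (A × Fin k) (I × Fin k) ℂ :=
  blockDiagonal fun j => (g j).toBlocks₁₂

/-- Block-diagonal matrix `c̃` of the `c`-blocks of a multiple colligation. -/
noncomputable def cT {k : ℕ} {A I : Type*}
    (g : Fin k → Matrix (A ⊕ I) (A ⊕ I) ℂ) : Matrix (I × Fin k) (A × Fin k) ℂ :=
  blockDiagonal fun j => (g j).toBlocks₂₁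

/-- Block-diagonal matrix `d̃` of the `d`-blocks of a multiple colligation. -/
noncomputable def dT {k : ℕ} {A I : Type*}
    (g : Fin k → Matrix (A ⊕ I) (A ⊕ I) ℂ) : Matrix (I × Fin k) (I × Fin k) ℂ :=
  blockDiagonal fun j => (g j).toBlocks₂₂

/-- `S̃`: the Kronecker-type block matrix whose `(i,j)` block is `s_{ij} · 1`. -/
def sT {k : ℕ} (I : Type*) [DecidableEq I] (S : Matrix (Fin k) (Fin k) ℂ) :
    Matrix (I × Fin k) (I × Fin k) ℂ :=
  Matrix.of fun p q => if p.1 = q.1 then S p.2 q.2 else 0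

/-- The multivariate characteristic function `χ(𝔄; S) = ã + b̃·(S̃ − d̃)⁻¹·c̃`. -/
noncomputable def chiM {k : ℕ} {A I : Type*} [Fintype A] [Fintype I] [DecidableEq I]
    (g : Fin k → Matrix (A ⊕ I) (A ⊕ I) ℂ) (S : Matrix (Fin k) (Fin k) ℂ) :
    Matrix (A × Fin k) (A × Fin k) ℂ :=
  aT g + bT g * (sT I S - dT g)⁻¹ * cT g

open scoped Kronecker

theorem diagonal_snd_mul_blockDiagonal {ι R m n : Type*} [Fintype ι] [DecidableEq ι]
    [CommSemiring R] [Fintype m] [Fintype n] [DecidableEq m] [DecidableEq n]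
    (d : ι → R) (M : ι → Matrix m n R) :
    diagonal (fun p : m × ι => d p.2) * blockDiagonal M
      = blockDiagonal M * diagonal (fun p : n × ι => d p.2) := by
  ext ⟨i, j⟩ ⟨i', j'⟩
  by_cases h : j = j'
  · subst h
    simp [diagonal_mul, mul_diagonal, blockDiagonal_apply, mul_comm]
  · simp [diagonal_mul, mul_diagonal, blockDiagonal_apply, h]

theorem add_mul_inv_mul_conj {R m n : Type*} [CommRing R] [Fintype m] [Fintype n]
    [DecidableEq m] [DecidableEq n] {a L : Matrix m m R} {b : Matrix m n R} {c : Matrix n m R}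
    {D : Matrix n n R} (X : Matrix n n R) (hL : IsUnit L.det) (hD : IsUnit D.det)
    (ha : L * a = a * L) (hb : L * b = b * D) (hc : D * c = c * L) :
    a + b * (D * X * D⁻¹)⁻¹ * c = L * (a + b * X⁻¹ * c) * L⁻¹ := by
  have ha' : L * a * L⁻¹ = a := by rw [ha, mul_assoc, mul_nonsing_inv _ hL, mul_one]
  have hc' : D⁻¹ * c = c * L⁻¹ := by
    calc D⁻¹ * c = D⁻¹ * (c * L) * L⁻¹ := by
          rw [Matrix.mul_assoc, Matrix.mul_assoc, mul_nonsing_inv _ hL, Matrix.mul_one]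
      _ = c * L⁻¹ := by rw [← hc, ← Matrix.mul_assoc, nonsing_inv_mul _ hD, Matrix.one_mul]
  rw [Matrix.mul_inv_rev, Matrix.mul_inv_rev, nonsing_inv_nonsing_inv _ hD, Matrix.mul_add,
    Matrix.add_mul, ha']
  simp only [← Matrix.mul_assoc, ← hb]
  simp only [Matrix.mul_assoc, hc']

section KroneckerLift

variable {k : ℕ} (I : Type*) [DecidableEq I]

theorem sT_eq_one_kronecker (S : Matrix (Fin k) (Fin k) ℂ) :
    sT I S = (1 : Matrix I I ℂ) ⊗ₖ S := by
  ext ⟨i, j⟩ ⟨i', j'⟩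
  simp [sT, one_apply]

theorem sT_mul [Fintype I] (S T : Matrix (Fin k) (Fin k) ℂ) :
    sT I (S * T) = sT I S * sT I T := by
  simp only [sT_eq_one_kronecker, ← mul_kronecker_mul, one_mul]

theorem sT_inv [Fintype I] (S : Matrix (Fin k) (Fin k) ℂ) : sT I S⁻¹ = (sT I S)⁻¹ := by
  rw [sT_eq_one_kronecker, sT_eq_one_kronecker, inv_kronecker, inv_one]

theorem sT_diagonal (d : Fin k → ℂ) :
    sT I (diagonal d) = diagonal fun p : I × Fin k => d p.2 := by
  rw [sT_eq_one_kronecker, ← diagonal_one, diagonal_kronecker_diagonal]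
  simp only [one_mul]

end KroneckerLift

/-- equivariance of the multivariate characteristic function under
conjugation by diagonal matrices: `χ(𝔄; λ·S·λ⁻¹) = Λ·χ(𝔄; S)·Λ⁻¹`, where `Λ` is the
block-diagonal matrix with blocks `λ_j · 1_α`. -/
theorem chiM_diag_conj {α N k : ℕ}
    (g : Fin k → Matrix (Fin α ⊕ Fin N) (Fin α ⊕ Fin N) ℂ)
    (lam : Fin k → ℂ) (hlam : ∀ j, lam j ≠ 0)
    (S : Matrix (Fin k) (Fin k) ℂ)
    (hS : IsUnit (sT (Fin N) S - dT g)) :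
    IsUnit (sT (Fin N) (diagonal lam * S * (diagonal lam)⁻¹) - dT g) ∧
      chiM g (diagonal lam * S * (diagonal lam)⁻¹)
        = diagonal (fun p : Fin α × Fin k => lam p.2) * chiM g S
            * (diagonal fun p : Fin α × Fin k => lam p.2)⁻¹ := by
  set D := diagonal fun p : Fin N × Fin k => lam p.2
  have hD : IsUnit D.det := by simp [D, det_diagonal, Finset.prod_ne_zero_iff, hlam]
  have hL : IsUnit (diagonal fun p : Fin α × Fin k => lam p.2).det := by
    simp [det_diagonal, Finset.prod_ne_zero_iff, hlam]
  have hdT : D * dT g * D⁻¹ = dT g := by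
    rw [dT, diagonal_snd_mul_blockDiagonal, mul_assoc, mul_nonsing_inv _ hD, mul_one]
  have hconj : sT (Fin N) (diagonal lam * S * (diagonal lam)⁻¹) - dT g
      = D * (sT (Fin N) S - dT g) * D⁻¹ := by
    rw [sT_mul, sT_mul, sT_inv, sT_diagonal, mul_sub, sub_mul, hdT]
  have hDunit : IsUnit D := (isUnit_iff_isUnit_det D).mpr hD
  refine ⟨?_, ?_⟩
  · rw [hconj]
    exact (hDunit.mul hS).mul (isUnit_nonsing_inv_iff.mpr hDunit)
  · rw [chiM, chiM, hconj]
    exact add_mul_inv_mul_conj _ hL hD (diagonal_snd_mul_blockDiagonal _ _)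
      (diagonal_snd_mul_blockDiagonal _ _) (diagonal_snd_mul_blockDiagonal _ _)
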